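/- Let L be a labelled transition system over Σ, P a state of L, and tr an availability trace. Then P may pass the test T_tr if and only if tr ∈ availTraces(P). -/
import Mathlib


/-- An availability action over the alphabet `E`: `Sum.inl a` is an ordinary event `a ∈ Σ`,
and `Sum.inr a` is the offer `◎a` of the event `a ∈ Σ`. -/
abbrev Act (E : Type*) := E ⊕ E

variable {E : Type*}

/-- `HasTrace step P tr` holds if `tr` is an availability trace of the state `P` of the LTS
with transition relation `step`: `tr` is the sequence of non-τ labels of some finite sequence
of consecutive derived transitions starting at `P`, where the derived transitions are the
ordinary transitions (labelled by `none` for τ, or `some a` for an event `a`), together with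
self-loops `P ⟶◎a P` whenever `P` has an `a`-transition. -/
inductive HasTrace {S : Type*} (step : S → Option E → S → Prop) : S → List (Act E) → Prop
  | nil (P : S) : HasTrace step P []
  | tau {P Q : S} {tr} : step P none Q → HasTrace step Q tr → HasTrace step P tr
  | ev {P Q : S} {a : E} {tr} : step P (some a) Q → HasTrace step Q tr →
      HasTrace step P (Sum.inl a :: tr)
  | offer {P : S} {a : E} {tr} : (∃ Q, step P (some a) Q) → HasTrace step P tr →
      HasTrace step P (Sum.inr a :: tr)

/-- The set of availability traces of a state `P`. -/
def availTraces {S : Type*} (step : S → Option E → S → Prop) (P : S) : Set (List (Act E)) :=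
  {tr | HasTrace step P tr}

/-- Tests: `T ::= SUCCESS | a → T | Ready a & T`. -/
inductive Test (E : Type*)
  | success : Test E
  | pre : E → Test E → Test E
  | ready : E → Test E → Test E

/-- `P ⟹τ P'`: `P'` is reachable from `P` by zero or more τ-transitions. -/
def TauStar {S : Type*} (step : S → Option E → S → Prop) : S → S → Prop :=
  Relation.ReflTransGen (fun P Q => step P none Q)

/-- `MayPass step P T`: the state `P` may pass the test `T`. -/
inductive MayPass {S : Type*} (step : S → Option E → S → Prop) : S → Test E → Prop
  | success (P : S) : MayPass step P .success
  | pre {P P' Q : S} {a : E} {T : Test E} : TauStar step P P' → step P' (some a) Q →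
      MayPass step Q T → MayPass step P (.pre a T)
  | ready {P P' : S} {a : E} {T : Test E} : TauStar step P P' → (∃ Q, step P' (some a) Q) →
      MayPass step P' T → MayPass step P (.ready a T)

/-- The test detecting the availability trace `tr`. -/
def testOf : List (Act E) → Test E
  | [] => .success
  | Sum.inl a :: tr => .pre a (testOf tr)
  | Sum.inr a :: tr => .ready a (testOf tr)

lemma MayPass.tau_prepend {S : Type*} {step : S → Option E → S → Prop} {P Q : S} {T : Test E}
    (h : step P none Q) (hm : MayPass step Q T) : MayPass step P T := by
  cases hm with
  | success => exact .success P
  | pre hts hs hm => exact .pre (Relation.ReflTransGen.head h hts) hs hm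
  | ready hts he hm => exact .ready (Relation.ReflTransGen.head h hts) he hm

lemma HasTrace.tauStar_prepend {S : Type*} {step : S → Option E → S → Prop} {P Q : S}
    {tr : List (Act E)} (hts : TauStar step P Q) (h : HasTrace step Q tr) :
    HasTrace step P tr := by
  induction hts using Relation.ReflTransGen.head_induction_on with
  | refl => exact h
  | head hstep _ ih => exact .tau hstep ih

/-- A process may pass the test `testOf tr` iff `tr` is one of its availability traces. -/
theorem mayPass_testOf_iff {E S : Type*} (step : S → Option E → S → Prop) (P : S)
    (tr : List (Act E)) :
    MayPass step P (testOf tr) ↔ tr ∈ availTraces step P := by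
  constructor
  · intro h
    induction tr generalizing P with
    | nil => exact .nil P
    | cons x tr ih =>
      cases x with
      | inl a =>
        cases h with
        | pre hts hs hm => exact HasTrace.tauStar_prepend hts (.ev hs (ih _ hm))
      | inr a =>
        cases h with
        | ready hts he hm => exact HasTrace.tauStar_prepend hts (.offer he (ih _ hm))
  · intro h
    induction h with
    | nil P => exact .success P
    | tau hstep _ ih => exact ih.tau_prepend hstep
    | ev hs _ ih => exact .pre Relation.ReflTransGen.refl hs ih
    | offer he _ ih => exact .ready Relation.ReflTransGen.refl he ih
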